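/- Let V(q) = ∑_{n≥0} a_n q^n ∈ ℂ[[q]] with a_0 = 2 and a_1 ≠ 0, and let d be a nonnegative even integer. Then for any λ-polynomial solution space: the map sending a polynomial f(q) = ∑_{j=0}^{d/2} c_j q^j of degree ≤ d/2 to the function P(λ) = [q^{-d/2} e^{V(q)λ} f(q)]_{q^0} (the coefficient of q^0 of the Laurent series in q) is an isomorphism onto the space of functions of the form e^{2λ} p(λ) with p a polynomial of degree ≤ d/2; in particular every such P satisfies (d/dλ - 2)^{d/2+1} P = 0, and conversely every solution e^{2λ}p(λ) with deg p ≤ d/2 arises from a unique f. -/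

import Mathlib

open PowerSeries Polynomial

/-- For a power series `V = 2 + a₁q + ⋯` and a polynomial `f(q)` of degree `≤ h`,
`[q^{-h} e^{V(q)λ} f(q)]_{q^0} = e^{2λ} (Φ f)(λ)` where
`Φ f = ∑_{m=0}^{h} (coeff_{q^h}((V-2)^m f)/m!) λ^m`. -/
noncomputable def Phi (V : PowerSeries ℂ) (h : ℕ) (f : Polynomial ℂ) : Polynomial ℂ :=
  ∑ m ∈ Finset.range (h + 1),
    Polynomial.C ((PowerSeries.coeff h ((V - 2) ^ m * (f : PowerSeries ℂ))) /
      (m.factorial : ℂ)) * Polynomial.X ^ m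

lemma phi_degree_le (V : PowerSeries ℂ) (h : ℕ) (f : Polynomial ℂ) :
    (Phi V h f).degree ≤ (h : WithBot ℕ) := by
  refine (Polynomial.degree_sum_le _ _).trans ?_
  rw [Finset.sup_le_iff]
  intro m hm
  exact (Polynomial.degree_C_mul_X_pow_le _ _).trans
    (by exact_mod_cast Nat.lt_succ_iff.mp (Finset.mem_range.mp hm))

lemma phi_coeff (V : PowerSeries ℂ) (h : ℕ) (f : Polynomial ℂ) (m : ℕ) (hm : m < h + 1) :
    (Phi V h f).coeff m
      = (PowerSeries.coeff h ((V - 2) ^ m * (f : PowerSeries ℂ))) / (m.factorial : ℂ) := by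
  unfold Phi
  rw [Polynomial.finset_sum_coeff]
  simp only [Polynomial.coeff_C_mul, Polynomial.coeff_X_pow, mul_ite, mul_one, mul_zero]
  rw [Finset.sum_ite_eq (Finset.range (h+1)) m, if_pos (Finset.mem_range.mpr hm)]

lemma const_sub (V : PowerSeries ℂ) (hV0 : PowerSeries.constantCoeff V = 2) :
    PowerSeries.constantCoeff (V - 2) = 0 := by
  rw [map_sub, hV0, map_ofNat, sub_self]

lemma coeff_pow_lt (V : PowerSeries ℂ) (hV0 : PowerSeries.constantCoeff V = 2)
    (m k : ℕ) (hk : k < m) : PowerSeries.coeff k ((V - 2) ^ m) = 0 := by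
  obtain ⟨W, hW⟩ := PowerSeries.X_dvd_iff.mpr (const_sub V hV0)
  rw [hW, mul_pow, PowerSeries.coeff_X_pow_mul', if_neg (by omega)]

lemma coeff_pow_self (V : PowerSeries ℂ) (hV0 : PowerSeries.constantCoeff V = 2) (m : ℕ) :
    PowerSeries.coeff m ((V - 2) ^ m) = (PowerSeries.coeff 1 V) ^ m := by
  obtain ⟨W, hW⟩ := PowerSeries.X_dvd_iff.mpr (const_sub V hV0)
  have hw0 : PowerSeries.constantCoeff W = PowerSeries.coeff 1 V := by
    have : PowerSeries.coeff 1 (V - 2) = PowerSeries.coeff 1 V := by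
      have h2 : (2 : ℂ⟦X⟧) = PowerSeries.C (2:ℂ) := (map_ofNat (PowerSeries.C (R := ℂ)) 2).symm
      rw [map_sub, h2, PowerSeries.coeff_C, if_neg one_ne_zero, sub_zero]
    rw [hW] at this
    have h2 : PowerSeries.coeff (0 + 1) (PowerSeries.X ^ 1 * W) = PowerSeries.coeff 0 W :=
      PowerSeries.coeff_X_pow_mul W 1 0
    simp only [pow_one, zero_add] at h2
    rw [h2] at this
    rw [← this, PowerSeries.coeff_zero_eq_constantCoeff]
  have : (V - 2) ^ m = PowerSeries.X ^ m * W ^ m := by rw [hW, mul_pow]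
  rw [this]
  have h3 : PowerSeries.coeff (0 + m) (PowerSeries.X ^ m * W ^ m) = PowerSeries.coeff 0 (W ^ m) :=
    PowerSeries.coeff_X_pow_mul _ m 0
  simp only [zero_add] at h3
  rw [h3, PowerSeries.coeff_zero_eq_constantCoeff, map_pow, hw0]

lemma phi_inj (V : PowerSeries ℂ) (hV0 : PowerSeries.constantCoeff V = 2)
    (hV1 : PowerSeries.coeff 1 V ≠ 0) (h : ℕ) (f : Polynomial ℂ)
    (hf : f.degree ≤ (h : WithBot ℕ)) (h0 : Phi V h f = 0) : f = 0 := by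
  have key : ∀ j, f.coeff j = 0 := by
    intro j
    induction j using Nat.strong_induction_on with
    | _ j ih =>
      by_cases hj : j ≤ h
      · have hm : h - j < h + 1 := by omega
        have hc := phi_coeff V h f (h - j) hm
        rw [h0, Polynomial.coeff_zero] at hc
        have hcoef : PowerSeries.coeff h ((V - 2) ^ (h - j) * (f : PowerSeries ℂ)) = 0 := by
          have := hc.symm
          field_simp at this
          exact (div_eq_zero_iff.mp this).resolve_right (by exact_mod_cast Nat.factorial_ne_zero _)
        rw [PowerSeries.coeff_mul] at hcoef
        rw [Finset.sum_eq_single_of_mem ((h - j, j))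
          (Finset.HasAntidiagonal.mem_antidiagonal.mpr (by omega)) ?other] at hcoef
        · have := coeff_pow_self V hV0 (h - j)
          rw [this, Polynomial.coeff_coe] at hcoef
          exact (mul_eq_zero.mp hcoef).resolve_left (pow_ne_zero _ hV1)
        · rintro ⟨a, b⟩ hab hne
          rw [Finset.HasAntidiagonal.mem_antidiagonal] at hab
          rcases lt_trichotomy b j with hb | hb | hb
          · rw [Polynomial.coeff_coe, ih b hb, mul_zero]
          · subst hb
            have ha : a = h - b := by omega
            exact absurd (by rw [ha]) hne
          · rw [coeff_pow_lt V hV0 _ a (by omega), zero_mul]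
      · rw [Polynomial.coeff_eq_zero_of_degree_lt]
        exact lt_of_le_of_lt hf (by exact_mod_cast Nat.lt_of_not_le hj)
  exact Polynomial.ext fun n => by rw [key n, Polynomial.coeff_zero]

lemma phi_add (V : PowerSeries ℂ) (h : ℕ) (f g : Polynomial ℂ) :
    Phi V h (f + g) = Phi V h f + Phi V h g := by
  unfold Phi
  rw [← Finset.sum_add_distrib]
  refine Finset.sum_congr rfl fun m _ => ?_
  rw [Polynomial.coe_add, mul_add, map_add, add_div, map_add, add_mul]

lemma phi_smul (V : PowerSeries ℂ) (h : ℕ) (c : ℂ) (f : Polynomial ℂ) :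
    Phi V h (c • f) = c • Phi V h f := by
  unfold Phi
  rw [Finset.smul_sum]
  refine Finset.sum_congr rfl fun m _ => ?_
  have : ((c • f : Polynomial ℂ) : PowerSeries ℂ) = PowerSeries.C c * (f : PowerSeries ℂ) := by
    rw [Polynomial.smul_eq_C_mul, Polynomial.coe_mul, Polynomial.coe_C]
  rw [this, mul_left_comm, PowerSeries.coeff_C_mul, mul_div_assoc, map_mul,
    Polynomial.smul_eq_C_mul, mul_assoc]

lemma deg_lt_succ_iff (p : Polynomial ℂ) (h : ℕ) :
    p.degree < (((h + 1 : ℕ)) : WithBot ℕ) ↔ p.degree ≤ (h : WithBot ℕ) := by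
  rcases eq_or_ne p 0 with rfl | hp
  · simp only [Polynomial.degree_zero]
    constructor
    · intro _; exact bot_le
    · intro _
      refine bot_lt_iff_ne_bot.mpr ?_
      simp [Nat.cast_withBot]
  · rw [Polynomial.degree_eq_natDegree hp]
    exact_mod_cast Nat.lt_succ_iff

noncomputable def PhiLM (V : PowerSeries ℂ) (h : ℕ) :
    Polynomial.degreeLT ℂ (h + 1) →ₗ[ℂ] Polynomial.degreeLT ℂ (h + 1) where
  toFun f := ⟨Phi V h f, by
    rw [Polynomial.mem_degreeLT, deg_lt_succ_iff]
    exact phi_degree_le V h f⟩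
  map_add' f g := Subtype.ext (phi_add V h f g)
  map_smul' c f := Subtype.ext (phi_smul V h c f)

lemma philm_bij (V : PowerSeries ℂ) (hV0 : PowerSeries.constantCoeff V = 2)
    (hV1 : PowerSeries.coeff 1 V ≠ 0) (h : ℕ) :
    Function.Injective (PhiLM V h) ∧ Function.Surjective (PhiLM V h) := by
  have : FiniteDimensional ℂ (Polynomial.degreeLT ℂ (h + 1)) :=
    LinearEquiv.finiteDimensional (Polynomial.degreeLTEquiv ℂ (h + 1)).symm
  have hinj : Function.Injective (PhiLM V h) := by
    rw [← LinearMap.ker_eq_bot, LinearMap.ker_eq_bot']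
    rintro ⟨f, hf⟩ hf0
    have hdeg : f.degree ≤ (h : WithBot ℕ) :=
      (deg_lt_succ_iff f h).mp (Polynomial.mem_degreeLT.mp hf)
    have : Phi V h f = 0 := congrArg Subtype.val hf0
    exact Subtype.ext (phi_inj V hV0 hV1 h f hdeg this)
  exact ⟨hinj, (LinearMap.injective_iff_surjective).mp hinj⟩

lemma deriv_step (Q : Polynomial ℂ) :
    (fun l : ℂ => deriv (fun l => Complex.exp (2 * l) * Q.eval l) l
        - 2 * (Complex.exp (2 * l) * Q.eval l))
    = fun l => Complex.exp (2 * l) * (Q.derivative).eval l := by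
  funext l
  have he : HasDerivAt (fun l : ℂ => Complex.exp (2 * l)) (Complex.exp (2 * l) * 2) l := by
    simpa using ((hasDerivAt_id l).const_mul (2 : ℂ)).cexp
  have h1 : HasDerivAt (fun l : ℂ => Complex.exp (2 * l) * Q.eval l)
      (Complex.exp (2 * l) * 2 * Q.eval l + Complex.exp (2 * l) * Q.derivative.eval l) l :=
    he.mul (Q.hasDerivAt l)
  simp only [h1.deriv]
  ring

lemma iterate_step (n : ℕ) : ∀ Q : Polynomial ℂ,
    (fun g : ℂ → ℂ => fun l => deriv g l - 2 * g l)^[n]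
      (fun l => Complex.exp (2 * l) * Q.eval l)
    = fun l => Complex.exp (2 * l) * ((Polynomial.derivative (R := ℂ))^[n] Q).eval l := by
  induction n with
  | zero => intro Q; simp
  | succ n ih =>
      intro Q
      rw [Function.iterate_succ_apply]
      beta_reduce
      rw [deriv_step, ih, Function.iterate_succ_apply]


/-- Lemma 5.1 of the paper: for `V(q) = 2 + a₁q + ⋯` with `a₁ ≠ 0` and `d` even,
every `P(λ) = [q^{-d/2} e^{V(q)λ} f(q)]_{q^0} = e^{2λ}(Φ f)(λ)` satisfies
`(d/dλ - 2)^{d/2+1} P = 0`, and conversely every solution `e^{2λ}p(λ)` with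
`deg p ≤ d/2` arises from a unique polynomial `f` of degree `≤ d/2`. -/
theorem coeff_q0_bijection (V : PowerSeries ℂ)
    (hV0 : PowerSeries.constantCoeff V = 2)
    (hV1 : PowerSeries.coeff 1 V ≠ 0) (d : ℕ) (hd : Even d) :
    (∀ f : Polynomial ℂ, f.degree ≤ ((d / 2 : ℕ) : WithBot ℕ) →
      (fun g : ℂ → ℂ => fun l => deriv g l - 2 * g l)^[d / 2 + 1]
        (fun l => Complex.exp (2 * l) * (Phi V (d / 2) f).eval l) = 0) ∧
    (∀ p : Polynomial ℂ, p.degree ≤ ((d / 2 : ℕ) : WithBot ℕ) →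
      ∃! f : Polynomial ℂ, f.degree ≤ ((d / 2 : ℕ) : WithBot ℕ) ∧
        (fun l => Complex.exp (2 * l) * (Phi V (d / 2) f).eval l) =
          (fun l => Complex.exp (2 * l) * p.eval l)) := by
  set h := d / 2
  obtain ⟨hinj, hsurj⟩ := philm_bij V hV0 hV1 h
  constructor
  · intro f _
    rw [iterate_step]
    have hdeg : (Phi V h f).natDegree < h + 1 :=
      Nat.lt_succ_of_le (Polynomial.natDegree_le_iff_degree_le.mpr (phi_degree_le V h f))
    rw [Polynomial.iterate_derivative_eq_zero hdeg]
    funext l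
    simp
  · intro p hp
    have hpmem : p ∈ Polynomial.degreeLT ℂ (h + 1) :=
      Polynomial.mem_degreeLT.mpr ((deg_lt_succ_iff p h).mpr hp)
    obtain ⟨⟨f, hfmem⟩, hf⟩ := hsurj ⟨p, hpmem⟩
    have hPhif : Phi V h f = p := congrArg Subtype.val hf
    have hfdeg : f.degree ≤ (h : WithBot ℕ) :=
      (deg_lt_succ_iff f h).mp (Polynomial.mem_degreeLT.mp hfmem)
    refine ⟨f, ⟨hfdeg, by rw [hPhif]⟩, ?_⟩
    rintro f' ⟨hf'deg, hfun⟩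
    have hPhif' : Phi V h f' = p :=
      Polynomial.funext fun l =>
        mul_left_cancel₀ (Complex.exp_ne_zero _) (congrFun hfun l)
    have hmem' : f' ∈ Polynomial.degreeLT ℂ (h + 1) :=
      Polynomial.mem_degreeLT.mpr ((deg_lt_succ_iff f' h).mpr hf'deg)
    have : PhiLM V h ⟨f', hmem'⟩ = PhiLM V h ⟨f, hfmem⟩ := by
      apply Subtype.ext
      show Phi V h f' = Phi V h f
      rw [hPhif, hPhif']
    exact congrArg Subtype.val (hinj this)
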